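/- Let j ∈ L¹(ℝ^d) be nonnegative with ∫_{ℝ^d} j(x) dx = 1, and for ε > 0 set j_ε(x) = ε^{−d} j(x/ε). Let ψ : ℝ^d → [0,∞) be Borel measurable and let u ∈ L¹(ℝ^d) satisfy ∫_{ℝ^d} |û(ξ)|² ψ(ξ) dξ < ∞. Then ∫_{ℝ^d} |(j_ε * u)^∧(ξ) − û(ξ)|² ψ(ξ) dξ → 0 as ε → 0⁺. In other words, mollifications of u converge to u in the ψ-weighted form 𝓑(v,v) = ∫ |v̂|² ψ dξ. -/

import Mathlib

/-!
By the convolution theorem and the dilation rule for the Fourier transform,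
`(j_ε * u)^(ξ) - û(ξ) = (ĵ(εξ) - 1) û(ξ)`. The transform `ĵ` is continuous, bounded by `‖j‖₁`
and satisfies `ĵ(0) = ∫ j = 1`, so `|ĵ(εξ) - 1|² |û(ξ)|² ψ(ξ)` tends to `0` pointwise as
`ε → 0` and is dominated by `(2‖j‖₁)² |û(ξ)|² ψ(ξ)`, which is integrable by assumption.
Dominated convergence concludes.
-/

open MeasureTheory Filter
open scoped RealInnerProductSpace ENNReal Topology

/-- The Fourier transform `ĝ(ξ) = ∫ e^{-2πi⟪ξ,x⟫} g(x) dx` of a real function on `ℝ^d`. -/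
noncomputable def fourierHat {d : ℕ} (g : EuclideanSpace ℝ (Fin d) → ℝ)
    (ξ : EuclideanSpace ℝ (Fin d)) : ℂ :=
  ∫ x, Complex.exp (-(2 * Real.pi * ⟪ξ, x⟫ : ℝ) * Complex.I) * (g x : ℂ)

open scoped FourierTransform Convolution

namespace Real

variable {V E : Type*} [NormedAddCommGroup V] [InnerProductSpace ℝ V] [FiniteDimensional ℝ V]
  [MeasurableSpace V] [BorelSpace V] [NormedAddCommGroup E] [NormedSpace ℂ E]

theorem fourier_dilate (f : V → E) {R : ℝ} (hR : 0 < R) (ξ : V) :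
    𝓕 (fun x => (R ^ Module.finrank ℝ V)⁻¹ • f (R⁻¹ • x)) ξ = 𝓕 f (R • ξ) := by
  have hphase : ∀ x : V, ⟪x, ξ⟫ = ⟪R⁻¹ • x, R • ξ⟫ := fun x => by
    rw [inner_smul_left, inner_smul_right, RCLike.conj_to_real, ← mul_assoc,
      inv_mul_cancel₀ hR.ne', one_mul]
  simp only [fourier_eq, smul_comm _ (R ^ Module.finrank ℝ V)⁻¹, integral_smul, hphase]
  rw [Measure.integral_comp_inv_smul_of_nonneg volume (fun y => 𝐞 (-⟪y, R • ξ⟫) • f y) hR.le,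
    inv_smul_smul₀ (pow_pos hR _).ne']

theorem fourier_zero_eq_integral (f : V → E) : 𝓕 f 0 = ∫ x, f x := by
  simp [fourier_eq]

end Real

section DominatedConvergence

variable {E F : Type*} [NormedAddCommGroup E] [NormedSpace ℝ E] [MeasurableSpace E]
  [OpensMeasurableSpace E] [NormedAddCommGroup F] {μ : Measure E}

theorem tendsto_lintegral_enorm_comp_smul_sub_sq_mul {m : E → F} (hm : Continuous m) {C : ℝ}
    (hmC : ∀ ξ, ‖m ξ‖ ≤ C) {c : E → ℝ≥0∞} (hc : Measurable c) (hc_fin : ∫⁻ ξ, c ξ ∂μ ≠ ∞) :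
    Tendsto (fun ε : ℝ => ∫⁻ ξ, ‖m (ε • ξ) - m 0‖ₑ ^ 2 * c ξ ∂μ) (𝓝 0) (𝓝 0) := by
  have hbound : ∀ (ε : ℝ) ξ,
      ‖m (ε • ξ) - m 0‖ₑ ^ 2 * c ξ ≤ ENNReal.ofReal (2 * C) ^ 2 * c ξ := by
    intro ε ξ
    gcongr
    rw [← ofReal_norm]
    exact ENNReal.ofReal_le_ofReal ((norm_sub_le _ _).trans (by linarith [hmC (ε • ξ), hmC 0]))
  have hlim : ∀ ξ, c ξ ≠ ∞ →
      Tendsto (fun ε : ℝ => ‖m (ε • ξ) - m 0‖ₑ ^ 2 * c ξ) (𝓝 0) (𝓝 0) := by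
    intro ξ hξ
    have hm_smul : Tendsto (fun ε : ℝ => m (ε • ξ) - m 0) (𝓝 0) (𝓝 (m 0 - m 0)) :=
      ((hm.comp (continuous_id.smul continuous_const)).tendsto' 0 (m 0) (by simp)).sub_const _
    simpa using ENNReal.Tendsto.mul_const (ENNReal.Tendsto.pow (n := 2) hm_smul.enorm) (Or.inr hξ)
  simpa using tendsto_lintegral_filter_of_dominated_convergence _
    (Eventually.of_forall fun ε =>
      ((by fun_prop : Continuous fun ξ => ‖m (ε • ξ) - m 0‖ₑ).measurable.pow_const 2).mul hc)
    (Eventually.of_forall fun ε => ae_of_all _ (hbound ε))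
    (by
      rw [lintegral_const_mul _ hc]
      exact ENNReal.mul_ne_top (ENNReal.pow_ne_top ENNReal.ofReal_ne_top) hc_fin)
    ((ae_lt_top hc hc_fin).mono fun ξ hξ => hlim ξ hξ.ne)

end DominatedConvergence

section fourierHat

variable {d : ℕ}

theorem fourierHat_eq_fourier (g : EuclideanSpace ℝ (Fin d) → ℝ) :
    fourierHat g = 𝓕 (fun x => (g x : ℂ)) := by
  ext ξ
  rw [fourierHat, Real.fourier_eq']
  congr! 3 with x
  rw [real_inner_comm]
  push_cast
  ring_nf

theorem continuous_fourierHat {g : EuclideanSpace ℝ (Fin d) → ℝ} (hg : Integrable g) :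
    Continuous (fourierHat g) := by
  rw [fourierHat_eq_fourier]
  exact VectorFourier.fourierIntegral_continuous Real.continuous_fourierChar
    continuous_inner hg.ofReal

theorem norm_fourierHat_le (g : EuclideanSpace ℝ (Fin d) → ℝ) (ξ : EuclideanSpace ℝ (Fin d)) :
    ‖fourierHat g ξ‖ ≤ ∫ x, ‖g x‖ := by
  rw [fourierHat_eq_fourier]
  refine (VectorFourier.norm_fourierIntegral_le_integral_norm 𝐞 volume _
    (fun x => (g x : ℂ)) ξ).trans_eq ?_
  simp

theorem fourierHat_zero (g : EuclideanSpace ℝ (Fin d) → ℝ) :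
    fourierHat g 0 = ((∫ x, g x : ℝ) : ℂ) := by
  rw [fourierHat_eq_fourier, Real.fourier_zero_eq_integral]
  exact integral_complex_ofReal

theorem fourierHat_convolution {f g : EuclideanSpace ℝ (Fin d) → ℝ} (hf : Integrable f)
    (hg : Integrable g) (ξ : EuclideanSpace ℝ (Fin d)) :
    fourierHat (fun x => ∫ y, f (x - y) * g y) ξ = fourierHat f ξ * fourierHat g ξ := by
  have hconv : (fun x => ((∫ y, f (x - y) * g y : ℝ) : ℂ)) =
      (fun x => (f x : ℂ)) ⋆[ContinuousLinearMap.mul ℂ ℂ] (fun x => (g x : ℂ)) := by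
    ext x
    rw [convolution_eq_swap, ← integral_complex_ofReal]
    simp
  simp only [fourierHat_eq_fourier, hconv]
  exact Real.fourier_mul_convolution_eq hf.ofReal hg.ofReal ξ

theorem fourierHat_dilate (g : EuclideanSpace ℝ (Fin d) → ℝ) {ε : ℝ} (hε : 0 < ε)
    (ξ : EuclideanSpace ℝ (Fin d)) :
    fourierHat (fun x => (ε ^ d)⁻¹ * g (ε⁻¹ • x)) ξ = fourierHat g (ε • ξ) := by
  have hfun : (fun x => (((ε ^ d)⁻¹ * g (ε⁻¹ • x) : ℝ) : ℂ)) =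
      fun x => (ε ^ Module.finrank ℝ (EuclideanSpace ℝ (Fin d)))⁻¹ • (g (ε⁻¹ • x) : ℂ) := by
    ext x
    rw [finrank_euclideanSpace_fin, Complex.real_smul]
    push_cast
    rfl
  rw [fourierHat_eq_fourier, fourierHat_eq_fourier, hfun]
  exact Real.fourier_dilate (fun y => (g y : ℂ)) hε ξ

end fourierHat

theorem stmt5_general {d : ℕ} (j u : EuclideanSpace ℝ (Fin d) → ℝ)
    (ψ : EuclideanSpace ℝ (Fin d) → ℝ)
    (hj : Integrable j) (hj1 : ∫ x, j x = 1)
    (hu : Integrable u) (hψm : Measurable ψ)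
    (hfin : (∫⁻ ξ, (‖fourierHat u ξ‖₊ : ℝ≥0∞) ^ 2 * ENNReal.ofReal (ψ ξ)) ≠ ⊤) :
    Tendsto (fun ε : ℝ =>
        ∫⁻ ξ, (‖fourierHat
              (fun x => ∫ y, ((ε ^ d)⁻¹ * j (ε⁻¹ • (x - y))) * u y) ξ
            - fourierHat u ξ‖₊ : ℝ≥0∞) ^ 2 * ENNReal.ofReal (ψ ξ))
      (𝓝[>] 0) (𝓝 0) := by
  have hc : Measurable fun ξ => ‖fourierHat u ξ‖ₑ ^ 2 * ENNReal.ofReal (ψ ξ) :=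
    ((continuous_fourierHat hu).enorm.measurable.pow_const 2).mul hψm.ennreal_ofReal
  have hlim := tendsto_lintegral_enorm_comp_smul_sub_sq_mul (μ := volume)
    (continuous_fourierHat hj) (norm_fourierHat_le j) hc hfin
  rw [fourierHat_zero, hj1, Complex.ofReal_one] at hlim
  refine (hlim.mono_left nhdsWithin_le_nhds).congr' ?_
  filter_upwards [self_mem_nhdsWithin] with ε (hε : 0 < ε)
  refine lintegral_congr fun ξ => ?_
  have hjε : Integrable fun x => (ε ^ d)⁻¹ * j (ε⁻¹ • x) :=
    (hj.comp_smul (inv_ne_zero hε.ne')).const_mul _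
  rw [fourierHat_convolution hjε hu, fourierHat_dilate j hε, ← sub_one_mul, ← enorm_eq_nnnorm,
    enorm_mul, mul_pow, mul_assoc]

/-- Let `j ∈ L¹(ℝ^d)` be nonnegative with `∫ j = 1`, `j_ε(x) = ε^{-d} j(x/ε)`,
`ψ : ℝ^d → [0,∞)` Borel measurable, and `u ∈ L¹(ℝ^d)` with `∫ |û|² ψ < ∞`. Then
`∫ |(j_ε * u)^∧(ξ) - û(ξ)|² ψ(ξ) dξ → 0` as `ε → 0⁺`, i.e. mollifications of `u`
converge to `u` in the `ψ`-weighted Dirichlet form. -/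
theorem stmt5 {d : ℕ} (j u : EuclideanSpace ℝ (Fin d) → ℝ)
    (ψ : EuclideanSpace ℝ (Fin d) → ℝ)
    (hj : Integrable j) (hj0 : ∀ x, 0 ≤ j x) (hj1 : ∫ x, j x = 1)
    (hu : Integrable u) (hψm : Measurable ψ) (hψ0 : ∀ ξ, 0 ≤ ψ ξ)
    (hfin : (∫⁻ ξ, (‖fourierHat u ξ‖₊ : ℝ≥0∞) ^ 2 * ENNReal.ofReal (ψ ξ)) ≠ ⊤) :
    Tendsto (fun ε : ℝ =>
        ∫⁻ ξ, (‖fourierHat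
              (fun x => ∫ y, ((ε ^ d)⁻¹ * j (ε⁻¹ • (x - y))) * u y) ξ
            - fourierHat u ξ‖₊ : ℝ≥0∞) ^ 2 * ENNReal.ofReal (ψ ξ))
      (𝓝[>] 0) (𝓝 0) :=
  stmt5_general j u ψ hj hj1 hu hψm hfin
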